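/- arXiv:1611.02679 — 11 statements merged into one kernel-verified Lean document; each statement's English description precedes it below -/
import Mathlib

section
/- Let M be a 2n×2n integer matrix of block form [[0, I+P],[L, Q]], where each block is n×n, P is lower triangular with zeros on the diagonal, L is upper triangular with zeros on the diagonal, and Q is arbitrary. Then det(t·M − Mᵀ) = t^n as a polynomial in t. -/
open Matrix Polynomial

/-- `det (t • M - Mᵀ)` as a polynomial in `t`. -/
noncomputable def polyDet {n : Type*} [Fintype n] [DecidableEq n]
    (M : Matrix n n ℤ) : Polynomial ℤ :=
  (Matrix.of fun i j => C (M i j) * X - C (M j i)).det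

lemma listprod_swap_aux (n : ℕ) (l : List (Fin n)) (hl : l.Nodup) :
    ∀ x : Fin n ⊕ Fin n,
      (l.map fun i => Equiv.swap (Sum.inl i : Fin n ⊕ Fin n) (Sum.inr i)).prod x =
        Sum.elim (fun j => if j ∈ l then Sum.inr j else Sum.inl j)
          (fun j => if j ∈ l then Sum.inl j else Sum.inr j) x := by
  induction l with
  | nil => intro x; cases x <;> simp
  | cons i l ih =>
    obtain ⟨hi, hnd⟩ := List.nodup_cons.mp hl
    intro x
    have key := ih hnd
    cases x with
    | inl j =>
      simp only [List.map_cons, List.prod_cons, Equiv.Perm.mul_apply, key (Sum.inl j)]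
      by_cases hj : j ∈ l
      · have : j ≠ i := fun h => hi (h ▸ hj)
        simp [hj, Equiv.swap_apply_of_ne_of_ne, this]
      · by_cases hji : j = i
        · subst hji; simp [hj]
        · simp [hj, hji, Equiv.swap_apply_of_ne_of_ne,
            fun h : Sum.inl j = Sum.inl i => hji (Sum.inl.inj h)]
    | inr j =>
      simp only [List.map_cons, List.prod_cons, Equiv.Perm.mul_apply, key (Sum.inr j)]
      by_cases hj : j ∈ l
      · have : j ≠ i := fun h => hi (h ▸ hj)
        simp [hj, Equiv.swap_apply_of_ne_of_ne, this]
      · by_cases hji : j = i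
        · subst hji; simp [hj]
        · simp [hj, hji, Equiv.swap_apply_of_ne_of_ne,
            fun h : Sum.inr j = Sum.inr i => hji (Sum.inr.inj h)]

lemma sumComm_eq_prod_swaps (n : ℕ) :
    (Equiv.sumComm (Fin n) (Fin n) : Equiv.Perm (Fin n ⊕ Fin n)) =
      ((List.finRange n).map fun i =>
        Equiv.swap (Sum.inl i : Fin n ⊕ Fin n) (Sum.inr i)).prod := by
  ext x
  rw [listprod_swap_aux n _ (List.nodup_finRange n) x]
  cases x <;> simp

lemma sign_sumComm_fin (n : ℕ) :
    Equiv.Perm.sign (Equiv.sumComm (Fin n) (Fin n) : Equiv.Perm (Fin n ⊕ Fin n)) = (-1) ^ n := by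
  rw [sumComm_eq_prod_swaps]
  rw [Equiv.Perm.sign_prod_list_swap]
  · simp
  · intro g hg
    simp only [List.mem_map] at hg
    obtain ⟨i, _, rfl⟩ := hg
    exact ⟨_, _, by simp, rfl⟩

theorem stmt0 (n : ℕ) (P L Q : Matrix (Fin n) (Fin n) ℤ)
    (hP : ∀ i j : Fin n, i ≤ j → P i j = 0)
    (hL : ∀ i j : Fin n, j ≤ i → L i j = 0) :
    polyDet (fromBlocks 0 (1 + P) L Q) = X ^ n := by
  have hsign := sign_sumComm_fin n
  set B : Matrix (Fin n) (Fin n) ℤ[X] :=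
    Matrix.of fun i j => C ((1 + P) i j) * X - C (L j i) with hB
  set Cm : Matrix (Fin n) (Fin n) ℤ[X] :=
    Matrix.of fun i j => C (L i j) * X - C ((1 + P) j i) with hC
  set D : Matrix (Fin n) (Fin n) ℤ[X] :=
    Matrix.of fun i j => C (Q i j) * X - C (Q j i) with hD
  have hN : (Matrix.of fun i j => C ((fromBlocks 0 (1 + P) L Q) i j) * X -
      C ((fromBlocks 0 (1 + P) L Q) j i)) =
      (fromBlocks Cm D 0 B).submatrix (Equiv.sumComm (Fin n) (Fin n)) id := by
    ext i j
    cases i <;> cases j <;> simp [fromBlocks, hB, hC, hD]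
  have hdetB : B.det = X ^ n := by
    rw [Matrix.det_of_lowerTriangular B (fun i j hij => ?_)]
    · simp [hB, Matrix.one_apply, hP _ _ le_rfl, hL _ _ le_rfl]
    · have hij' : i < j := hij
      simp [hB, Matrix.one_apply_ne (ne_of_lt hij'), hP i j hij'.le, hL j i hij'.le]
  have hdetC : Cm.det = (-1) ^ n := by
    rw [Matrix.det_of_upperTriangular (fun i j hij => ?_)]
    · simp [hC, Matrix.one_apply, hP _ _ le_rfl, hL _ _ le_rfl]
    · have hij' : j < i := hij
      simp [hC, Matrix.one_apply_ne (ne_of_lt hij'), hP j i hij'.le, hL i j hij'.le]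
  rw [polyDet, hN, Matrix.det_permute, Matrix.det_fromBlocks_zero₂₁, hsign, hdetB, hdetC]
  push_cast
  rw [← mul_assoc, ← mul_pow, neg_mul_neg, one_mul, one_pow, one_mul]
end

section
/- Let θ be a bilinear form on ℤ^m given by an integer matrix M, and let U ⊆ ℤ^m be a subgroup such that θ restricted to U, represented by a matrix B with respect to some basis of U, satisfies det(t·B − Bᵀ) = ±t^k in ℤ[t]. Then U is a direct summand of ℤ^m. -/
open Matrix Polynomial

namespace LinearMap

variable {R E F : Type*} [CommRing R] [AddCommGroup E] [Module R E] [AddCommGroup F] [Module R F]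

theorem isCompl_range_ker_of_comp_eq_id {L : F →ₗ[R] E} {g : E →ₗ[R] F} (h : g ∘ₗ L = id) :
    IsCompl (range L) (ker g) := by
  have hidem : IsIdempotentElem (L ∘ₗ g) := by
    rw [IsIdempotentElem, Module.End.mul_eq_comp, ← comp_assoc, comp_assoc L g, h, comp_id]
  have hrange : range (L ∘ₗ g) = range L :=
    range_comp_of_range_eq_top L <|
      range_eq_top_of_surjective g (Function.LeftInverse.surjective (DFunLike.congr_fun h))
  have hker : ker (L ∘ₗ g) = ker g :=
    ker_comp_of_ker_eq_bot g <|
      ker_eq_bot_of_injective (Function.LeftInverse.injective (DFunLike.congr_fun h))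
  rw [← hrange, ← hker]
  exact IsIdempotentElem.isCompl hidem

end LinearMap

section

variable {R E ι : Type*} [CommRing R] [AddCommGroup E] [Module R E] [Fintype ι] [DecidableEq ι]

open LinearMap in
theorem Submodule.exists_isCompl_span_range_of_isUnit_det {u : ι → E} {f : E →ₗ[R] ι → R}
    {A : Matrix ι ι R} (hf : f ∘ₗ Fintype.linearCombination R u = A.mulVecLin)
    (hA : IsUnit A.det) : ∃ V : Submodule R E, IsCompl (span R (Set.range u)) V := by
  refine ⟨ker (A⁻¹.mulVecLin ∘ₗ f), ?_⟩
  rw [← Fintype.range_linearCombination]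
  refine isCompl_range_ker_of_comp_eq_id ?_
  rw [LinearMap.comp_assoc, hf, ← mulVecLin_mul, nonsing_inv_mul A hA, mulVecLin_one]

end

theorem Matrix.mulVecLin_antisymm_comp_linearCombination {R n ι : Type*} [CommRing R]
    [Fintype n] [Fintype ι] [DecidableEq ι] {M : Matrix n n R} {u : ι → n → R} {B : Matrix ι ι R}
    (hB : ∀ i j, B i j = u i ⬝ᵥ M *ᵥ u j) :
    (Matrix.of fun i => u i ᵥ* M - M *ᵥ u i).mulVecLin ∘ₗ Fintype.linearCombination R u =
      (B - Bᵀ).mulVecLin := by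
  ext j i
  simp only [LinearMap.comp_apply, LinearMap.coe_single, Fintype.linearCombination_apply_single,
    one_smul, mulVecLin_apply, mulVec_single_one]
  change (u i ᵥ* M - M *ᵥ u i) ⬝ᵥ u j = (B - Bᵀ) i j
  rw [sub_dotProduct, ← dotProduct_mulVec, dotProduct_comm (M *ᵥ u i), ← hB, ← hB]
  rfl

theorem polyDet_eval_one {n : Type*} [Fintype n] [DecidableEq n] (B : Matrix n n ℤ) :
    (polyDet B).eval 1 = (B - Bᵀ).det := by
  rw [polyDet, ← coe_evalRingHom, RingHom.map_det]
  congr 1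
  ext i j
  simp

theorem isUnit_det_sub_transpose_of_polyDet {n : Type*} [Fintype n] [DecidableEq n]
    {B : Matrix n n ℤ} (h : ∃ l : ℕ, polyDet B = X ^ l ∨ polyDet B = -X ^ l) :
    IsUnit (B - Bᵀ).det := by
  obtain ⟨l, hl | hl⟩ := h <;> simp [← polyDet_eval_one, hl]

theorem stmt3_general (m k : ℕ) (M : Matrix (Fin m) (Fin m) ℤ)
    (u : Fin k → (Fin m → ℤ))
    (B : Matrix (Fin k) (Fin k) ℤ)
    (hB : ∀ i j, B i j = u i ⬝ᵥ M *ᵥ u j)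
    (hunit : ∃ l : ℕ, polyDet B = X ^ l ∨ polyDet B = -X ^ l) :
    ∃ V : Submodule ℤ (Fin m → ℤ), IsCompl (Submodule.span ℤ (Set.range u)) V :=
  Submodule.exists_isCompl_span_range_of_isUnit_det (mulVecLin_antisymm_comp_linearCombination hB)
    (isUnit_det_sub_transpose_of_polyDet hunit)

theorem stmt3 (m k : ℕ) (M : Matrix (Fin m) (Fin m) ℤ)
    (u : Fin k → (Fin m → ℤ)) (hu : LinearIndependent ℤ u)
    (B : Matrix (Fin k) (Fin k) ℤ)
    (hB : ∀ i j, B i j = u i ⬝ᵥ M *ᵥ u j)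
    (hunit : ∃ l : ℕ, polyDet B = X ^ l ∨ polyDet B = -X ^ l) :
    ∃ V : Submodule ℤ (Fin m → ℤ), IsCompl (Submodule.span ℤ (Set.range u)) V :=
  stmt3_general m k M u B hB hunit
end

section
/- For every g×g integer matrix Q and every g×g integer matrix P that is upper triangular with zeros on the diagonal, there exists a unique g×g integer matrix N such that Q = N + NP + (NP)ᵀ. -/
open Matrix

theorem stmt4 (g : ℕ) (Q P : Matrix (Fin g) (Fin g) ℤ)
    (hP : ∀ i j : Fin g, j ≤ i → P i j = 0) :
    ∃! N : Matrix (Fin g) (Fin g) ℤ, Q = N + N * P + (N * P)ᵀ := by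
  set F : Matrix (Fin g) (Fin g) ℤ → Matrix (Fin g) (Fin g) ℤ :=
    fun M => Q - M * P - (M * P)ᵀ with hF
  -- key: F M entries at (i,j) depend only on entries of M with smaller index-sum
  have key : ∀ (M M' : Matrix (Fin g) (Fin g) ℤ) (s : ℕ),
      (∀ i j : Fin g, (i : ℕ) + j < s → M i j = M' i j) →
      ∀ i j : Fin g, (i : ℕ) + j < s + 1 → F M i j = F M' i j := by
    intro M M' s h i j hij
    simp only [hF, Matrix.sub_apply, Matrix.transpose_apply, Matrix.mul_apply]
    have h1 : ∀ k : Fin g, M i k * P k j = M' i k * P k j := by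
      intro k
      rcases lt_or_ge (k : ℕ) (j : ℕ) with hk | hk
      · rw [h i k (by omega)]
      · rw [hP k j (by exact_mod_cast hk), mul_zero, mul_zero]
    have h2 : ∀ k : Fin g, M j k * P k i = M' j k * P k i := by
      intro k
      rcases lt_or_ge (k : ℕ) (i : ℕ) with hk | hk
      · rw [h j k (by omega)]
      · rw [hP k i (by exact_mod_cast hk), mul_zero, mul_zero]
    rw [Finset.sum_congr rfl (fun k _ => h1 k), Finset.sum_congr rfl (fun k _ => h2 k)]
  have fix : ∀ M : Matrix (Fin g) (Fin g) ℤ, F M = M ↔ Q = M + M * P + (M * P)ᵀ := by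
    intro M
    show Q - M * P - (M * P)ᵀ = M ↔ Q = M + M * P + (M * P)ᵀ
    rw [sub_eq_iff_eq_add, sub_eq_iff_eq_add, add_right_comm]
  -- fixed points agree everywhere
  have uniq : ∀ M M' : Matrix (Fin g) (Fin g) ℤ, F M = M → F M' = M' → M = M' := by
    intro M M' hM hM'
    have hn : ∀ n : ℕ, ∀ i j : Fin g, (i : ℕ) + j < n → M i j = M' i j := by
      intro n
      induction n with
      | zero => intro i j hij; omega
      | succ n ih =>
        intro i j hij
        rw [← hM, ← hM']
        exact key M M' n ih i j hij
    ext i j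
    exact hn (2 * g) i j (by omega)
  -- existence: iterate F from 0
  have hiter : ∀ n : ℕ, ∀ i j : Fin g, (i : ℕ) + j < n →
      F^[n] 0 i j = F^[n + 1] 0 i j := by
    intro n
    induction n with
    | zero => intro i j hij; omega
    | succ n ih =>
      intro i j hij
      rw [Function.iterate_succ_apply' F n 0, Function.iterate_succ_apply' F (n + 1) 0]
      exact key (F^[n] 0) (F^[n + 1] 0) n ih i j hij
  set N : Matrix (Fin g) (Fin g) ℤ := F^[2 * g] 0 with hN
  have hfix : F N = N := by
    have : F^[2 * g] 0 = F^[2 * g + 1] 0 := by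
      ext i j
      exact hiter (2 * g) i j (by omega)
    rw [hN, ← Function.iterate_succ_apply' F (2 * g) 0, ← this]
  refine ⟨N, (fix N).mp hfix, ?_⟩
  intro M hM
  exact uniq M N ((fix M).mpr hM) hfix
end

section
/- Let M = [[0, I+P],[Pᵀ, Q]] be a 2g×2g integer matrix in g×g blocks, with P upper triangular with zeros on the diagonal and Q arbitrary. Then M is congruent over ℤ (i.e. there is T ∈ GL(2g,ℤ) with TᵀMT of the stated form) to a matrix of the form [[0, I+P],[Pᵀ, 0]]. -/
open Matrix

private lemma pow_strictUpper_apply (g : ℕ) (P : Matrix (Fin g) (Fin g) ℤ)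
    (hP : ∀ i j : Fin g, j ≤ i → P i j = 0) :
    ∀ k (i j : Fin g), (j : ℕ) < (i : ℕ) + k → (P ^ k) i j = 0 := by
  intro k
  induction k with
  | zero =>
    intro i j h
    simp only [Nat.add_zero] at h
    rw [pow_zero, Matrix.one_apply_ne]
    exact fun e => absurd (congrArg Fin.val e) (by omega)
  | succ k ih =>
    intro i j h
    rw [pow_succ', Matrix.mul_apply]
    apply Finset.sum_eq_zero
    intro m _
    by_cases hm : (m : ℕ) ≤ (i : ℕ)
    · rw [hP i m (by exact_mod_cast hm), zero_mul]
    · rw [ih m j (by omega), mul_zero]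

private lemma pow_strictUpper (g : ℕ) (P : Matrix (Fin g) (Fin g) ℤ)
    (hP : ∀ i j : Fin g, j ≤ i → P i j = 0) : P ^ g = 0 := by
  ext i j
  rw [pow_strictUpper_apply g P hP g i j (by omega)]
  rfl

private lemma solveA {g : ℕ} (n : ℕ) (L Q : Matrix (Fin g) (Fin g) ℤ)
    (hLn : L ^ n = 0) : ∃ A : Matrix (Fin g) (Fin g) ℤ, A + L * Aᵀ = Q := by
  refine ⟨∑ m ∈ Finset.range n, (L ^ m * Q * Lᵀ ^ m - L ^ (m + 1) * Qᵀ * Lᵀ ^ m), ?_⟩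
  have key : ∀ m : ℕ,
      (L ^ m * Q * Lᵀ ^ m - L ^ (m + 1) * Qᵀ * Lᵀ ^ m) +
        L * (L ^ m * Q * Lᵀ ^ m - L ^ (m + 1) * Qᵀ * Lᵀ ^ m)ᵀ =
      L ^ m * Q * Lᵀ ^ m - L ^ (m + 1) * Q * Lᵀ ^ (m + 1) := by
    intro m
    have ht : (L ^ m * Q * Lᵀ ^ m - L ^ (m + 1) * Qᵀ * Lᵀ ^ m)ᵀ =
        L ^ m * Qᵀ * Lᵀ ^ m - L ^ m * Q * Lᵀ ^ (m + 1) := by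
      simp only [Matrix.transpose_sub, Matrix.transpose_mul, Matrix.transpose_pow,
        Matrix.transpose_transpose, Matrix.mul_assoc]
    rw [ht, Matrix.mul_sub]
    simp only [← Matrix.mul_assoc]
    simp only [← pow_succ']
    abel
  rw [Matrix.transpose_sum, Finset.mul_sum, ← Finset.sum_add_distrib]
  have : ∀ m ∈ Finset.range n,
      (L ^ m * Q * Lᵀ ^ m - L ^ (m + 1) * Qᵀ * Lᵀ ^ m) +
        L * (L ^ m * Q * Lᵀ ^ m - L ^ (m + 1) * Qᵀ * Lᵀ ^ m)ᵀ =
      (fun m => L ^ m * Q * Lᵀ ^ m) m - (fun m => L ^ m * Q * Lᵀ ^ m) (m + 1) :=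
    fun m _ => key m
  rw [Finset.sum_congr rfl this, Finset.sum_range_sub' (fun m => L ^ m * Q * Lᵀ ^ m) n]
  simp [hLn]

theorem stmt5 (g : ℕ) (P Q : Matrix (Fin g) (Fin g) ℤ)
    (hP : ∀ i j : Fin g, j ≤ i → P i j = 0) :
    ∃ T : Matrix (Fin g ⊕ Fin g) (Fin g ⊕ Fin g) ℤ, IsUnit T.det ∧
      Tᵀ * fromBlocks 0 (1 + P) Pᵀ Q * T = fromBlocks 0 (1 + P) Pᵀ 0 := by
  -- 1 + P is upper triangular with unit diagonal, hence invertible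
  have hdet : (1 + P).det = 1 := by
    rw [Matrix.det_of_upperTriangular]
    · apply Finset.prod_eq_one
      intro i _
      simp [Matrix.add_apply, hP i i le_rfl]
    · intro i j hij
      simp only [Matrix.add_apply, hP i j (le_of_lt hij),
        Matrix.one_apply_ne (show i ≠ j from ne_of_gt hij)]
      ring
  have hUdet : IsUnit (1 + P).det := by rw [hdet]; exact isUnit_one
  set R : Matrix (Fin g) (Fin g) ℤ := (1 + P)⁻¹ with hR
  have hRmul : R * (1 + P) = 1 := Matrix.nonsing_inv_mul _ hUdet
  have hmulR : (1 + P) * R = 1 := Matrix.mul_nonsing_inv _ hUdet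
  -- L := Pᵀ * Rᵀ commutes as product, and is nilpotent
  have hUdetT : IsUnit ((1 + P)ᵀ).det := by rwa [Matrix.det_transpose]
  haveI : Invertible ((1 + P)ᵀ) := Matrix.invertibleOfIsUnitDet _ hUdetT
  have hRT : Rᵀ = ((1 + P)ᵀ)⁻¹ := Matrix.transpose_nonsing_inv _
  have hcomm : Pᵀ * Rᵀ = Rᵀ * Pᵀ := by
    have hc : Commute Pᵀ ((1 + P)ᵀ) := by
      unfold Commute SemiconjBy
      simp only [Matrix.transpose_add, Matrix.transpose_one]
      noncomm_ring
    have := hc.invOf_right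
    unfold Commute SemiconjBy at this
    rw [invOf_eq_nonsing_inv] at this
    rw [hRT, this]
  have hLpow : (Pᵀ * Rᵀ) ^ g = 0 := by
    rw [Commute.mul_pow hcomm]
    have hPT : (Pᵀ) ^ g = 0 := by
      rw [← Matrix.transpose_pow, pow_strictUpper g P hP, Matrix.transpose_zero]
    rw [hPT, zero_mul]
  -- solve N * (1 + P) + Pᵀ * Nᵀ = Q
  obtain ⟨A, hAeq⟩ := solveA g (Pᵀ * Rᵀ) Q hLpow
  have hNeq : (A * R) * (1 + P) + Pᵀ * (A * R)ᵀ = Q := by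
    have h1 : (A * R) * (1 + P) = A := by
      rw [Matrix.mul_assoc, hRmul, Matrix.mul_one]
    have h2 : Pᵀ * (A * R)ᵀ = (Pᵀ * Rᵀ) * Aᵀ := by
      rw [Matrix.transpose_mul, Matrix.mul_assoc]
    rw [h1, h2, ← hAeq]
  set N : Matrix (Fin g) (Fin g) ℤ := A * R with hN
  clear_value N
  clear hAeq hLpow hcomm hRT hRmul hmulR hR hdet hUdet hUdetT
  refine ⟨fromBlocks 1 (-Nᵀ) 0 1, ?_, ?_⟩
  · rw [Matrix.det_fromBlocks_zero₂₁]
    simp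
  · rw [Matrix.fromBlocks_transpose, Matrix.fromBlocks_multiply, Matrix.fromBlocks_multiply]
    rw [Matrix.fromBlocks_inj]
    refine ⟨by simp, by simp, by simp, ?_⟩
    simp only [Matrix.zero_mul, Matrix.mul_zero, Matrix.one_mul, Matrix.mul_one,
      Matrix.transpose_one, Matrix.transpose_neg, Matrix.transpose_transpose,
      add_zero, zero_add, Matrix.neg_mul, Matrix.mul_neg, neg_zero]
    rw [show -(Pᵀ * Nᵀ) + (-(N * (1 + P)) + Q) = Q - (N * (1 + P) + Pᵀ * Nᵀ) by abel,
      hNeq, sub_self]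
end

section
/- Let A be a 4×4 integer matrix whose upper-left 2×2 block is zero (i.e. A is metabolic with metabolizer spanned by the first two basis vectors), and suppose both A and A − Aᵀ are invertible over ℤ. Then there exist linearly independent vectors u, v ∈ ℤ⁴ with uᵀAu = 0, uᵀAv = 1, and vᵀAu = 0. -/
/-!
Write `A = [[0, E], [F, G]]` in `2 × 2` blocks. Then `det A = det E * det F` and
`det (A - Aᵀ) = det (E - Fᵀ) * det (F - Eᵀ)`, so `E`, `F` and `E - Fᵀ` are unimodular. For
`u = (x, 0)` and `v = (0, w)` the three conditions reduce to `x ⬝ E w = 1` and `w ⬝ F x = 0`.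
Taking `x = ε J Fᵀ w`, with `J` the rotation by a right angle, makes the second one automatic,
and the first asks the binary quadratic form `w ↦ (J Fᵀ w) ⬝ E w` to represent a unit `ε`. Its
discriminant is `(det E + det F - det (E - Fᵀ))² - 4 det E det F ∈ {5, -3}`, and by Lagrange
reduction every integral binary quadratic form of non-square discriminant `|D| < 12`
represents `1` or `-1`.
-/

open Matrix

theorem Int.exists_abs_add_two_mul_mul_le (a b : ℤ) (ha : a ≠ 0) :
    ∃ k : ℤ, |b + 2 * a * k| ≤ |a| := by
  have hm : 0 < 2 * a.natAbs := by omega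
  have hlo := Int.le_bmod (x := b) hm
  have hhi := Int.bmod_lt (x := b) hm
  obtain ⟨k, hk⟩ : 2 * a ∣ b.bmod (2 * a.natAbs) - b := by
    rw [← Int.natAbs_dvd]; simpa using Int.dvd_bmod_sub_self (x := b) (m := 2 * a.natAbs)
  refine ⟨k, abs_le.mpr ⟨?_, ?_⟩⟩ <;> rcases abs_cases a with ⟨h, _⟩ | ⟨h, _⟩ <;> omega

theorem Int.exists_isUnit_quadForm_of_discr {D : ℤ} (hD : ¬ IsSquare D) (hD12 : |D| < 12)
    (a b c : ℤ) (hdisc : b ^ 2 - 4 * a * c = D) :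
    ∃ x y : ℤ, IsUnit (a * x ^ 2 + b * x * y + c * y ^ 2) := by
  rcases eq_or_ne a 0 with rfl | ha
  · exact absurd ⟨b, by rw [← hdisc]; ring⟩ hD
  by_cases ha1 : IsUnit a
  · exact ⟨1, 0, by simpa using ha1⟩
  have ha2 : 2 ≤ |a| := by
    rw [Int.isUnit_iff_abs_eq] at ha1
    have := abs_pos.mpr ha; omega
  -- The substitution `x ↦ x + k y` turns the form into `c' x² + b' x y + a y²` (after swapping
  -- `x` and `y`); with `|b'| ≤ |a|` the discriminant forces `|c'| < |a|`.
  obtain ⟨k, hk⟩ := Int.exists_abs_add_two_mul_mul_le a b ha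
  set b' := b + 2 * a * k
  set c' := a * k ^ 2 + b * k + c
  have hdisc' : b' ^ 2 - 4 * c' * a = D := by rw [← hdisc]; ring
  have hc' : |c'| < |a| := by
    have h4 : |b' ^ 2 - D| = 4 * (|a| * |c'|) := by
      rw [← hdisc', sub_sub_cancel, abs_mul, abs_mul, abs_of_pos (by norm_num : (0 : ℤ) < 4)]
      ring
    have h5 : |b' ^ 2 - D| ≤ b' ^ 2 + |D| := by
      have := abs_sub (b' ^ 2) D
      rwa [abs_sq] at this
    have h6 : b' ^ 2 ≤ a ^ 2 := sq_le_sq.mpr hk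
    nlinarith [abs_nonneg c', sq_abs a]
  obtain ⟨x, y, hxy⟩ := Int.exists_isUnit_quadForm_of_discr hD hD12 c' b' a hdisc'
  exact ⟨y + k * x, x, by convert hxy using 1; ring⟩
termination_by a.natAbs
decreasing_by zify; exact hc'

theorem Int.sq_add_sub_sub_four_mul_eq_of_isUnit {ε₁ ε₂ ε₃ : ℤ} (h₁ : IsUnit ε₁)
    (h₂ : IsUnit ε₂) (h₃ : IsUnit ε₃) :
    (ε₁ + ε₂ - ε₃) ^ 2 - 4 * ε₁ * ε₂ = 5 ∨ (ε₁ + ε₂ - ε₃) ^ 2 - 4 * ε₁ * ε₂ = -3 := by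
  rcases Int.isUnit_iff.mp h₁ with rfl | rfl <;> rcases Int.isUnit_iff.mp h₂ with rfl | rfl <;>
    rcases Int.isUnit_iff.mp h₃ with rfl | rfl <;> norm_num

theorem Int.not_isSquare_five : ¬ IsSquare (5 : ℤ) := by
  rintro ⟨r, hr⟩
  have h1 : -3 < r := by nlinarith
  have h2 : r < 3 := by nlinarith
  interval_cases r <;> omega

theorem Matrix.exists_dotProduct_mulVec_eq_one_and_eq_zero (E F : Matrix (Fin 2) (Fin 2) ℤ)
    (hE : IsUnit E.det) (hF : IsUnit F.det) (hEF : IsUnit (E - Fᵀ).det) :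
    ∃ x w : Fin 2 → ℤ, x ⬝ᵥ E *ᵥ w = 1 ∧ w ⬝ᵥ F *ᵥ x = 0 := by
  obtain ⟨D, hD, hD_not_sq, hD_lt⟩ : ∃ D,
      (E.det + F.det - (E - Fᵀ).det) ^ 2 - 4 * E.det * F.det = D ∧ ¬ IsSquare D ∧ |D| < 12 := by
    rcases Int.sq_add_sub_sub_four_mul_eq_of_isUnit hE hF hEF with h | h
    · exact ⟨5, h, Int.not_isSquare_five, by norm_num⟩
    · exact ⟨-3, h, fun ⟨r, hr⟩ => by nlinarith, by norm_num⟩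
  set a := F 0 0 * E 1 0 - F 0 1 * E 0 0
  set b := F 0 0 * E 1 1 - F 0 1 * E 0 1 + F 1 0 * E 1 0 - F 1 1 * E 0 0
  set c := F 1 0 * E 1 1 - F 1 1 * E 0 1
  obtain ⟨w₀, w₁, hw⟩ := Int.exists_isUnit_quadForm_of_discr hD_not_sq hD_lt a b c
    (by rw [← hD]; simp only [det_fin_two, sub_apply, transpose_apply]; ring)
  refine ⟨(a * w₀ ^ 2 + b * w₀ * w₁ + c * w₁ ^ 2) •
    ![-(F 0 1 * w₀ + F 1 1 * w₁), F 0 0 * w₀ + F 1 0 * w₁], ![w₀, w₁], ?_, ?_⟩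
  · simp only [dotProduct, mulVec, Fin.sum_univ_two, Pi.smul_apply, smul_eq_mul, cons_val_zero,
      cons_val_one, cons_val_fin_one]
    linear_combination Int.isUnit_mul_self hw
  · simp only [dotProduct, mulVec, Fin.sum_univ_two, Pi.smul_apply, smul_eq_mul, cons_val_zero,
      cons_val_one, cons_val_fin_one]
    ring

theorem Matrix.det_fin_four_of_upperLeft_eq_zero {R : Type*} [CommRing R]
    (A : Matrix (Fin 4) (Fin 4) R) (h : ∀ i j : Fin 4, i.val < 2 → j.val < 2 → A i j = 0) :
    A.det = (A.submatrix ![0, 1] ![2, 3]).det * (A.submatrix ![2, 3] ![0, 1]).det := by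
  rw [det_fin_two, det_fin_two, det_succ_row_zero]
  simp only [Fin.sum_univ_four, det_fin_three, submatrix_apply, Fin.succAbove, Fin.reduceSucc,
    Fin.reduceCastSucc, Fin.reduceLT, ↓reduceIte, cons_val_zero, cons_val_one, cons_val_fin_one,
    Fin.isValue, Fin.coe_ofNat_eq_mod, h 0 0 (by decide) (by decide), h 0 1 (by decide) (by decide),
    h 1 0 (by decide) (by decide), h 1 1 (by decide) (by decide)]
  ring

theorem Matrix.linearIndependent_pair_of_dotProduct_mulVec {R n : Type*} [CommRing R] [IsDomain R]
    [Fintype n] (A : Matrix n n R) {u v : n → R} (huu : u ⬝ᵥ A *ᵥ u = 0)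
    (huv : u ⬝ᵥ A *ᵥ v = 1) : LinearIndependent R ![u, v] := by
  refine LinearIndependent.pair_iff.mpr fun s t hst => ?_
  have ht : t = 0 := by
    simpa [mulVec_add, mulVec_smul, huu, huv] using congr_arg (u ⬝ᵥ A *ᵥ ·) hst
  have hu : u ≠ 0 := by rintro rfl; simp at huv
  subst ht
  simpa [hu] using hst

theorem stmt6 (A : Matrix (Fin 4) (Fin 4) ℤ)
    (hmeta : ∀ i j : Fin 4, i.val < 2 → j.val < 2 → A i j = 0)
    (hA : IsUnit A.det) (hA' : IsUnit (A - Aᵀ).det) :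
    ∃ u v : Fin 4 → ℤ, LinearIndependent ℤ ![u, v] ∧
      u ⬝ᵥ A *ᵥ u = 0 ∧ u ⬝ᵥ A *ᵥ v = 1 ∧ v ⬝ᵥ A *ᵥ u = 0 := by
  rw [det_fin_four_of_upperLeft_eq_zero A hmeta] at hA
  rw [det_fin_four_of_upperLeft_eq_zero (A - Aᵀ) fun i j hi hj => by
    rw [Matrix.sub_apply, transpose_apply, hmeta i j hi hj, hmeta j i hj hi, sub_zero]] at hA'
  obtain ⟨x, w, hxw, hwx⟩ := exists_dotProduct_mulVec_eq_one_and_eq_zero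
    (A.submatrix ![0, 1] ![2, 3]) (A.submatrix ![2, 3] ![0, 1])
    (isUnit_of_mul_isUnit_left hA) (isUnit_of_mul_isUnit_right hA) (isUnit_of_mul_isUnit_left hA')
  have huu : ![x 0, x 1, 0, 0] ⬝ᵥ A *ᵥ ![x 0, x 1, 0, 0] = 0 := by
    simp [dotProduct, mulVec, Fin.sum_univ_four, hmeta 0 0, hmeta 0 1, hmeta 1 0, hmeta 1 1]
  have huv : ![x 0, x 1, 0, 0] ⬝ᵥ A *ᵥ ![0, 0, w 0, w 1] = 1 := by
    convert hxw using 1; simp [dotProduct, mulVec, Fin.sum_univ_four, Fin.sum_univ_two]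
  have hvu : ![0, 0, w 0, w 1] ⬝ᵥ A *ᵥ ![x 0, x 1, 0, 0] = 0 := by
    convert hwx using 1; simp [dotProduct, mulVec, Fin.sum_univ_four, Fin.sum_univ_two]
  exact ⟨_, _, linearIndependent_pair_of_dotProduct_mulVec A huu huv, huu, huv, hvu⟩
end

section
/- Let V' be a 2×2 integer matrix with det(V') = ±1 and det(V' − I) = ±1. Write V' = [[a,b],[c,d]]. If in addition |a| ≤ |b|/2, |a| ≤ |c|/2, and |a| ≤ |d|, then a = 0. -/
open Matrix

/-!
Subtracting `det (V - 1) = det V - tr V + 1` from `det V` shows that `a + d = tr V` is odd with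
`|a + d| ≤ 3`. Then `4a² ≤ |bc| = |ad ∓ 1| ≤ |a|(|a| + 3) + 1` forces `|a| ≤ 1`. If `|a| = 1`, then
`d` is even, so `bc = ad ∓ 1` is odd; odd `b, c` with `|b|, |c| ≥ 2` give `|bc| ≥ 9`, whereas
`|bc| ≤ |d| + 1 ≤ 5`.
-/

theorem Matrix.det_sub_one_fin_two {R : Type*} [CommRing R] (V : Matrix (Fin 2) (Fin 2) R) :
    (V - 1).det = V.det - V.trace + 1 := by
  rw [det_fin_two, det_fin_two, trace_fin_two]
  simp only [sub_apply, one_apply_eq, one_apply_ne zero_ne_one, one_apply_ne one_ne_zero, sub_zero]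
  ring

namespace Int

variable {a b c d : ℤ}

theorem three_le_abs_of_odd (hb : Odd b) (h : 2 ≤ |b|) : 3 ≤ |b| := by
  obtain ⟨k, hk⟩ := odd_abs.mpr hb
  omega

theorem abs_le_abs_add_three (htr : |a + d| ≤ 3) : |d| ≤ |a| + 3 := by
  have := abs_sub (a + d) a
  rw [add_sub_cancel_left] at this
  linarith

theorem abs_mul_le_of_det_eq (hdet : a * d - b * c = 1 ∨ a * d - b * c = -1) :
    |b * c| ≤ |a| * |d| + 1 := by
  rw [← abs_mul]
  rcases hdet with h | h <;>
    calc |b * c| = |a * d + -(a * d - b * c)| := by ring_nf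
      _ ≤ |a * d| + |-(a * d - b * c)| := abs_add_le _ _
      _ = |a * d| + 1 := by simp [h]

theorem abs_le_one_of_det_eq (hdet : a * d - b * c = 1 ∨ a * d - b * c = -1)
    (htr : |a + d| ≤ 3) (hb : 2 * |a| ≤ |b|) (hc : 2 * |a| ≤ |c|) : |a| ≤ 1 := by
  have hbc : 4 * (|a| * |a|) ≤ |b * c| := by
    rw [abs_mul]
    nlinarith [mul_le_mul hb hc (by positivity) (abs_nonneg b)]
  nlinarith [abs_mul_le_of_det_eq hdet, abs_le_abs_add_three htr, abs_nonneg a]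

theorem abs_ne_one_of_det_eq (hdet : a * d - b * c = 1 ∨ a * d - b * c = -1)
    (htr : |a + d| ≤ 3) (htr_odd : Odd (a + d)) (hb : 2 * |a| ≤ |b|) (hc : 2 * |a| ≤ |c|) :
    |a| ≠ 1 := by
  intro ha
  have ha_odd : Odd a := odd_abs.mp (ha ▸ odd_one)
  have hd_even : Even d := by simpa using htr_odd.sub_odd ha_odd
  have hdet_odd : Odd (a * d - b * c) := by rcases hdet with h | h <;> simp [h]
  have hbc_odd : Odd (b * c) := by simpa using (hd_even.mul_left a).sub_odd hdet_odd
  obtain ⟨hb_odd, hc_odd⟩ := Int.odd_mul.mp hbc_odd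
  have hb3 := three_le_abs_of_odd hb_odd (by omega)
  have hc3 := three_le_abs_of_odd hc_odd (by omega)
  have hbc := abs_mul_le_of_det_eq hdet
  rw [ha, abs_mul] at hbc
  nlinarith [abs_le_abs_add_three htr]

theorem eq_zero_of_det_eq (hdet : a * d - b * c = 1 ∨ a * d - b * c = -1)
    (htr : |a + d| ≤ 3) (htr_odd : Odd (a + d)) (hb : 2 * |a| ≤ |b|) (hc : 2 * |a| ≤ |c|) :
    a = 0 := by
  have := abs_le_one_of_det_eq hdet htr hb hc
  have := abs_ne_one_of_det_eq hdet htr htr_odd hb hc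
  have := abs_nonneg a
  exact abs_eq_zero.mp (by omega)

end Int

theorem stmt7_general (V : Matrix (Fin 2) (Fin 2) ℤ)
    (h1 : V.det = 1 ∨ V.det = -1)
    (h2 : (V - 1).det = 1 ∨ (V - 1).det = -1)
    (hb : 2 * |V 0 0| ≤ |V 0 1|)
    (hc : 2 * |V 0 0| ≤ |V 1 0|) :
    V 0 0 = 0 := by
  have htr : V 0 0 + V 1 1 = V.det - (V - 1).det + 1 := by
    rw [Matrix.det_sub_one_fin_two, ← trace_fin_two]
    ring
  have htrace : |V 0 0 + V 1 1| ≤ 3 ∧ Odd (V 0 0 + V 1 1) := by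
    rcases h1 with h1 | h1 <;> rcases h2 with h2 | h2 <;> rw [htr, h1, h2] <;> decide
  rw [det_fin_two] at h1
  exact Int.eq_zero_of_det_eq h1 htrace.1 htrace.2 hb hc

theorem stmt7 (V : Matrix (Fin 2) (Fin 2) ℤ)
    (h1 : V.det = 1 ∨ V.det = -1)
    (h2 : (V - 1).det = 1 ∨ (V - 1).det = -1)
    (hb : 2 * |V 0 0| ≤ |V 0 1|)
    (hc : 2 * |V 0 0| ≤ |V 1 0|)
    (hd : |V 0 0| ≤ |V 1 1|) :
    V 0 0 = 0 :=
  stmt7_general V h1 h2 hb hc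
end

section
/- Let V' be a 2×2 integer matrix with det V' = ±1 and det(V' − I) = ±1. Then there exists T ∈ GL(2,ℤ) such that T⁻¹V'T has a zero entry on its diagonal. -/
open Matrix

lemma exists_shift (A B : ℤ) (hA : A ≠ 0) : ∃ k : ℤ, (B + 2*A*k).natAbs ≤ A.natAbs := by
  set M : ℤ := 2 * (A.natAbs : ℤ) with hM
  have hMpos : 0 < M := by have := Int.natAbs_pos.mpr hA; omega
  have h0 : 0 ≤ B % M := Int.emod_nonneg B (by omega)
  have h1 : B % M < M := Int.emod_lt_of_pos B hMpos
  have hsub : B - B % M = M * (B / M) := by rw [Int.emod_def]; ring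
  have h2AM : (2*A) ∣ M := by
    rcases Int.natAbs_eq A with h | h
    · exact ⟨1, by rw [hM]; nlinarith [h]⟩
    · exact ⟨-1, by rw [hM]; nlinarith [h]⟩
  have hdvd : (2*A) ∣ (B - B % M) := hsub ▸ h2AM.mul_right (B / M)
  by_cases hle : B % M ≤ (A.natAbs : ℤ)
  · obtain ⟨k, hk⟩ := hdvd
    refine ⟨-k, ?_⟩
    have : B + 2*A*(-k) = B % M := by linarith [hk]
    rw [this]; omega
  · have hdvd2 : (2*A) ∣ (B - (B % M - M)) := by
      have : B - (B % M - M) = (B - B % M) + M := by ring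
      rw [this]; exact hdvd.add h2AM
    obtain ⟨k, hk⟩ := hdvd2
    refine ⟨-k, ?_⟩
    have : B + 2*A*(-k) = B % M - M := by linarith [hk]
    rw [this]; omega

lemma sq_le_of_natAbs_le (a b : ℤ) (h : a.natAbs ≤ b.natAbs) : a^2 ≤ b^2 := by
  rw [← Int.natAbs_pow_two a, ← Int.natAbs_pow_two b]
  have : (a.natAbs:ℤ) ≤ b.natAbs := by exact_mod_cast h
  have ha : (0:ℤ) ≤ a.natAbs := by positivity
  nlinarith

lemma natAbs_lt_of_sq_lt (a b : ℤ) (h : a^2 < b^2) : a.natAbs < b.natAbs := by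
  by_contra hc
  push_neg at hc
  have h2 : (b.natAbs:ℤ) ≤ a.natAbs := by exact_mod_cast hc
  have hb : (0:ℤ) ≤ b.natAbs := by positivity
  nlinarith [Int.natAbs_pow_two a, Int.natAbs_pow_two b]

lemma rep (n : ℕ) : ∀ A B C : ℤ, A.natAbs = n →
    (B^2 - 4*(A*C) = -3 ∨ B^2 - 4*(A*C) = 5) →
    ∃ x y : ℤ, (A*x^2 + B*x*y + C*y^2)^2 = 1 := by
  induction n using Nat.strong_induction_on with
  | _ n IH =>
  intro A B C hn hD
  rcases eq_or_ne A 0 with h0 | h0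
  · exfalso
    subst h0
    have hB : B ≤ 3 ∧ -3 ≤ B := by
      constructor <;> rcases hD with h | h <;> nlinarith [sq_nonneg (B-3), sq_nonneg (B+3)]
    obtain ⟨hB1, hB2⟩ := hB
    interval_cases B <;> simp_all
  by_cases h1 : A.natAbs = 1
  · have : A = 1 ∨ A = -1 := by omega
    rcases this with rfl | rfl
    · exact ⟨1, 0, by ring⟩
    · exact ⟨1, 0, by ring⟩
  have hn2 : 2 ≤ A.natAbs := by
    have := Int.natAbs_pos.mpr h0; omega
  by_cases hC : C.natAbs < A.natAbs
  · obtain ⟨x, y, hxy⟩ := IH C.natAbs (hn ▸ hC) C B A rfl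
      (by rcases hD with h | h
          · left; linear_combination h
          · right; linear_combination h)
    exact ⟨y, x, by linear_combination hxy⟩
  · push_neg at hC
    obtain ⟨k, hk⟩ := exists_shift A B h0
    have hb2 : (B + 2*A*k)^2 ≤ A^2 := sq_le_of_natAbs_le _ _ hk
    have ha2 : 4 ≤ A^2 := by
      have h2 : (2:ℤ) ≤ (A.natAbs : ℤ) := by exact_mod_cast hn2
      nlinarith [Int.natAbs_pow_two A]
    have hC'lt : (A*k^2 + B*k + C).natAbs < A.natAbs := by
      apply natAbs_lt_of_sq_lt
      have key : (4*(A*(A*k^2 + B*k + C)))^2 ≤ (A^2 + 5)^2 := by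
        rcases hD with h | h <;> nlinarith [sq_nonneg (B + 2*A*k)]
      nlinarith
    obtain ⟨x, y, hxy⟩ := IH (A*k^2 + B*k + C).natAbs (hn ▸ hC'lt) (A*k^2 + B*k + C) (B + 2*A*k) A rfl
      (by rcases hD with h | h
          · left; linear_combination h
          · right; linear_combination h)
    exact ⟨y + k*x, x, by linear_combination hxy⟩

theorem stmt8 (V : Matrix (Fin 2) (Fin 2) ℤ)
    (h1 : V.det = 1 ∨ V.det = -1)
    (h2 : (V - 1).det = 1 ∨ (V - 1).det = -1) :
    ∃ T T' : Matrix (Fin 2) (Fin 2) ℤ, T * T' = 1 ∧ T' * T = 1 ∧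
      ∃ i : Fin 2, (T' * V * T) i i = 0 := by
  set a := V 0 0 with ha
  set b := V 0 1 with hb
  set c := V 1 0 with hc
  set d := V 1 1 with hd
  rw [Matrix.det_fin_two] at h1
  rw [Matrix.det_fin_two] at h2
  simp only [Matrix.sub_apply, Matrix.one_apply_eq, Matrix.one_apply_ne, Fin.zero_eq_one_iff,
    Matrix.one_apply] at h2
  norm_num at h2
  have hD : (d - a)^2 - 4*(c*(-b)) = -3 ∨ (d - a)^2 - 4*(c*(-b)) = 5 := by
    rcases h1 with h1 | h1 <;> rcases h2 with h2 | h2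
    · left; linear_combination (a + d + 1) * h1 - (a + d + 1) * h2 - 4 * h1
    · right; linear_combination (a + d + 3) * h1 - (a + d + 3) * h2 - 4 * h1
    · right; linear_combination (a + d - 1) * h1 - (a + d - 1) * h2 - 4 * h1
    · right; linear_combination (a + d + 1) * h1 - (a + d + 1) * h2 - 4 * h1
  obtain ⟨x, y, hxy⟩ := rep c.natAbs c (d - a) (-b) rfl hD
  set ε : ℤ := c*x^2 + (d - a)*x*y + (-b)*y^2 with hε
  refine ⟨!![x, a*x+b*y; y, c*x+d*y], ε • !![c*x+d*y, -(a*x+b*y); -y, x], ?_, ?_, 0, ?_⟩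
  · ext i j
    fin_cases i <;> fin_cases j <;>
      simp only [Matrix.mul_apply, Matrix.smul_apply, Fin.sum_univ_two, Matrix.cons_val_zero,
        Matrix.cons_val_one, Matrix.head_cons, Matrix.of_apply, Matrix.cons_val',
        Matrix.empty_val', Matrix.cons_val_fin_one, smul_eq_mul, Matrix.vecHead, Matrix.vecTail,
        Matrix.one_apply, Fin.zero_eta, Fin.mk_one] <;>
      norm_num <;>
      first
        | linear_combination hxy
        | linear_combination -hxy
        | ring
  · ext i j
    fin_cases i <;> fin_cases j <;>
      simp only [Matrix.mul_apply, Matrix.smul_apply, Fin.sum_univ_two, Matrix.cons_val_zero,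
        Matrix.cons_val_one, Matrix.head_cons, Matrix.of_apply, Matrix.cons_val',
        Matrix.empty_val', Matrix.cons_val_fin_one, smul_eq_mul, Matrix.vecHead, Matrix.vecTail,
        Matrix.one_apply, Fin.zero_eta, Fin.mk_one] <;>
      norm_num <;>
      first
        | linear_combination hxy
        | linear_combination -hxy
        | ring
  · simp only [Matrix.mul_apply, Matrix.smul_apply, Fin.sum_univ_two, Matrix.cons_val_zero,
      Matrix.cons_val_one, Matrix.head_cons, Matrix.of_apply, Matrix.cons_val',
      Matrix.empty_val', Matrix.cons_val_fin_one, smul_eq_mul, Matrix.vecHead, Matrix.vecTail,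
      ← ha, ← hb, ← hc, ← hd]
    ring
end

section
/- Let A be an m×m integer matrix, and suppose U ⊆ ℤ^m is a subgroup of rank 2d with basis matrix whose Gram matrix B (with respect to A) satisfies det(B + Bᵀ) = ±1. Then for every prime p, the rank of A + Aᵀ over ℤ/p is at least 2d; consequently the cokernel of A + Aᵀ can be generated by m − 2d elements over ℤ/p. -/
open Matrix

theorem stmt12 (m d : ℕ) (A : Matrix (Fin m) (Fin m) ℤ)
    (u : Fin (2 * d) → (Fin m → ℤ)) (hu : LinearIndependent ℤ u)
    (B : Matrix (Fin (2 * d)) (Fin (2 * d)) ℤ)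
    (hB : ∀ i j, B i j = u i ⬝ᵥ A *ᵥ u j)
    (hdet : (B + Bᵀ).det = 1 ∨ (B + Bᵀ).det = -1)
    (p : ℕ) (hp : p.Prime) :
    2 * d ≤ ((A + Aᵀ).map (Int.cast : ℤ → ZMod p)).rank ∧
      ∃ w : Fin (m - 2 * d) → (Fin m → ZMod p),
        Submodule.span (ZMod p) (Set.range w) ⊔
          LinearMap.range ((A + Aᵀ).map (Int.cast : ℤ → ZMod p)).mulVecLin = ⊤ := by
  haveI : Fact p.Prime := ⟨hp⟩
  set U : Matrix (Fin (2 * d)) (Fin m) ℤ := Matrix.of u with hU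
  have hfac : B + Bᵀ = U * (A + Aᵀ) * Uᵀ := by
    ext i j
    have h1 : (U * (A + Aᵀ) * Uᵀ) i j = u i ⬝ᵥ (A + Aᵀ) *ᵥ u j := by
      simp only [Matrix.mul_apply, dotProduct, mulVec, transpose_apply, Pi.add_apply,
        Matrix.add_apply, Finset.sum_mul, Finset.mul_sum, hU, of_apply]
      rw [Finset.sum_comm]
      exact Finset.sum_congr rfl fun _ _ => Finset.sum_congr rfl fun _ _ => by ring
    rw [h1]
    have h2 : u j ⬝ᵥ A *ᵥ u i = u i ⬝ᵥ Aᵀ *ᵥ u j := by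
      conv_rhs => rw [dotProduct_mulVec, vecMul_transpose]
      exact dotProduct_comm _ _
    simp [add_mulVec, dotProduct_add, hB, h2]
  set M' : Matrix (Fin m) (Fin m) (ZMod p) := (A + Aᵀ).map (Int.cast : ℤ → ZMod p) with hM'
  set U' : Matrix (Fin (2 * d)) (Fin m) (ZMod p) := U.map (Int.cast : ℤ → ZMod p) with hU'
  have hfac' : (B + Bᵀ).map ((Int.castRingHom (ZMod p)) : ℤ → ZMod p) = U' * M' * U'ᵀ := by
    rw [hfac, Matrix.map_mul, Matrix.map_mul, Matrix.transpose_map]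
    rfl
  have hunit : IsUnit ((B + Bᵀ).map ((Int.castRingHom (ZMod p)) : ℤ → ZMod p)).det := by
    rw [show (B + Bᵀ).map ((Int.castRingHom (ZMod p)) : ℤ → ZMod p) =
      (Int.castRingHom (ZMod p)).mapMatrix (B + Bᵀ) from rfl, ← RingHom.map_det]
    rcases hdet with h | h <;> rw [h] <;> simp
  have hrank1 : ((B + Bᵀ).map ((Int.castRingHom (ZMod p)) : ℤ → ZMod p)).rank = 2 * d := by
    rw [Matrix.rank_of_isUnit _ ((Matrix.isUnit_iff_isUnit_det _).2 hunit)]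
    simp
  have hrank : 2 * d ≤ M'.rank := by
    calc 2 * d = (U' * M' * U'ᵀ).rank := by rw [← hfac', hrank1]
    _ ≤ (U' * M').rank := Matrix.rank_mul_le_left _ _
    _ ≤ M'.rank := Matrix.rank_mul_le_right _ _
  refine ⟨hrank, ?_⟩
  set V := LinearMap.range M'.mulVecLin with hV
  obtain ⟨W, hW⟩ := Submodule.exists_isCompl V
  have hdim : Module.finrank (ZMod p) V + Module.finrank (ZMod p) W = m := by
    rw [Submodule.finrank_add_eq_of_isCompl hW, Module.finrank_fin_fun]
  have hVrank : Module.finrank (ZMod p) V = M'.rank := rfl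
  have hWle : Module.finrank (ZMod p) W ≤ m - 2 * d := by omega
  let b := Module.finBasis (ZMod p) W
  refine ⟨fun i => if h : (i : ℕ) < Module.finrank (ZMod p) W then (b ⟨i, h⟩ : Fin m → ZMod p) else 0, ?_⟩
  rw [eq_top_iff, ← hW.sup_eq_top, sup_comm]
  refine sup_le_sup_right ?_ _
  intro x hx
  have : x ∈ Submodule.span (ZMod p) (Set.range (fun k => ((b k : W) : Fin m → ZMod p))) := by
    have := b.span_eq
    have hx' : (⟨x, hx⟩ : W) ∈ Submodule.span (ZMod p) (Set.range b) := by
      rw [this]; trivial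
    have h2 : x ∈ Submodule.map W.subtype (Submodule.span (ZMod p) (Set.range ⇑b)) :=
      ⟨_, hx', rfl⟩
    rw [Submodule.map_span] at h2
    refine Submodule.span_mono ?_ h2
    rintro _ ⟨_, ⟨k, rfl⟩, rfl⟩
    exact ⟨k, rfl⟩
  refine Submodule.span_mono ?_ this
  rintro _ ⟨k, rfl⟩
  have hk : (k : ℕ) < m - 2 * d := lt_of_lt_of_le k.2 hWle
  exact ⟨⟨k, hk⟩, by simp [k.2]⟩
end

section
/- Let M be an m×m integer matrix and let U ⊆ ℤ^m be a subgroup of rank 2d whose Gram matrix B with respect to M satisfies det(t·B − Bᵀ) = ±t^d. Let M̃ be the (m+2)×(m+2) matrix obtained from M by a stabilization: M̃ has M as its top-left m×m block, an arbitrary column vector v ∈ ℤ^m in position (1..m, m+1), entry 1 in position (m+1, m+2), and all other new entries zero. Then U ⊕ ℤ² (embedding the last two coordinates) has Gram matrix B̃ with respect to M̃ satisfying det(t·B̃ − B̃ᵀ) = ±t^{d+1}. -/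
open Matrix Polynomial

theorem stmt14 (m d : ℕ) (M : Matrix (Fin m) (Fin m) ℤ)
    (u : Fin (2 * d) → (Fin m → ℤ)) (hu : LinearIndependent ℤ u)
    (B : Matrix (Fin (2 * d)) (Fin (2 * d)) ℤ)
    (hB : ∀ i j, B i j = u i ⬝ᵥ M *ᵥ u j)
    (hBdet : polyDet B = X ^ d ∨ polyDet B = -X ^ d)
    (v : Fin m → ℤ)
    -- the stabilized matrix [[M, v, 0], [0, 0, 1], [0, 0, 0]]
    (Mt : Matrix (Fin m ⊕ Fin 2) (Fin m ⊕ Fin 2) ℤ)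
    (hMt : Mt = fromBlocks M (Matrix.of fun i (j : Fin 2) => if j = 0 then v i else 0)
      0 !![0, 1; 0, 0])
    -- the subgroup U ⊕ ℤ², embedding the last two coordinates
    (ut : Fin (2 * d) ⊕ Fin 2 → (Fin m ⊕ Fin 2 → ℤ))
    (hut : ut = Sum.elim (fun i => Sum.elim (u i) 0)
      (fun j => Sum.elim 0 (Pi.single j 1)))
    (Bt : Matrix (Fin (2 * d) ⊕ Fin 2) (Fin (2 * d) ⊕ Fin 2) ℤ)
    (hBt : ∀ i j, Bt i j = ut i ⬝ᵥ Mt *ᵥ ut j) :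
    polyDet Bt = X ^ (d + 1) ∨ polyDet Bt = -X ^ (d + 1) := by
  classical
  set w : Fin (2 * d) → ℤ := fun i => u i ⬝ᵥ v with hw
  -- compute the entries of Bt
  have hBt1 : ∀ i j, Bt (Sum.inl i) (Sum.inl j) = B i j := by
    intro i j
    rw [hBt, hB, hut, hMt]
    simp [Matrix.fromBlocks_mulVec, sumElim_dotProduct_sumElim]
  have hBt2 : ∀ i (j : Fin 2), Bt (Sum.inl i) (Sum.inr j) = if j = 0 then w i else 0 := by
    intro i j
    rw [hBt, hut, hMt]
    simp only [Sum.elim_inl, Sum.elim_inr, Matrix.fromBlocks_mulVec, Matrix.mulVec_zero,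
      Matrix.mulVec_single, sumElim_dotProduct_sumElim]
    fin_cases j <;>
      simp [Matrix.mulVec, dotProduct, Finset.mul_sum, mul_comm, hw]
  have hBt3 : ∀ (j : Fin 2) i, Bt (Sum.inr j) (Sum.inl i) = 0 := by
    intro j i
    rw [hBt, hut, hMt]
    simp [Matrix.fromBlocks_mulVec, sumElim_dotProduct_sumElim]
  have hBt4 : ∀ (j k : Fin 2), Bt (Sum.inr j) (Sum.inr k) = !![0, 1; 0, 0] j k := by
    intro j k
    rw [hBt, hut, hMt]
    simp only [Sum.elim_inl, Sum.elim_inr, Matrix.fromBlocks_mulVec, Matrix.mulVec_zero,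
      Matrix.mulVec_single, sumElim_dotProduct_sumElim]
    fin_cases j <;> fin_cases k <;>
      simp [dotProduct, Pi.single_apply, Fin.sum_univ_two]
  -- the matrix whose determinant is polyDet Bt
  set N : Matrix (Fin (2 * d) ⊕ Fin 2) (Fin (2 * d) ⊕ Fin 2) (Polynomial ℤ) :=
    Matrix.of fun i j => C (Bt i j) * X - C (Bt j i) with hN
  set A : Matrix (Fin (2 * d)) (Fin (2 * d)) (Polynomial ℤ) :=
    Matrix.of fun i j => C (B i j) * X - C (B j i) with hA
  -- the block lower-triangular comparison matrix
  set N₁ : Matrix (Fin (2 * d) ⊕ Fin 2) (Fin (2 * d) ⊕ Fin 2) (Polynomial ℤ) :=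
    fromBlocks A 0
      (Matrix.of fun (j : Fin 2) i => if j = 0 then -C (w i) else 0)
      !![0, X; -1, 0] with hN₁
  have hdetN₁ : N₁.det = A.det * X := by
    rw [hN₁, Matrix.det_fromBlocks_zero₁₂, Matrix.det_fin_two_of]
    ring
  -- N is N₁ with column (inr 0) replaced
  have hNup : N = N₁.updateCol (Sum.inr 0) (fun i => N i (Sum.inr 0)) := by
    ext i j
    rcases eq_or_ne j (Sum.inr 0) with rfl | hj
    · simp [Matrix.updateCol_apply]
    · rw [Matrix.updateCol_ne hj]
      rcases i with i | i <;> rcases j with j | j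
      · simp [hN, hN₁, hA, hBt1]
      · have hj' : j ≠ 0 := fun h => hj (by simp [h])
        fin_cases j
        · exact absurd rfl hj'
        · simp [hN, hN₁, hBt2, hBt3]
      · simp [hN, hN₁, hBt2, hBt3]
        fin_cases i <;> simp
      · have hj' : j ≠ 0 := fun h => hj (by simp [h])
        fin_cases j
        · exact absurd rfl hj'
        · fin_cases i <;> simp [hN, hN₁, hBt4]
  -- split the new column into two pieces
  have hcol : (fun i => N i (Sum.inr 0)) =
      (Sum.elim (fun i => C (w i) * X) 0 : _ → Polynomial ℤ) +
        (fun i => N₁ i (Sum.inr 0)) := by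
    funext i
    rcases i with i | i
    · simp [hN, hN₁, hBt2, hBt3]
    · fin_cases i <;> simp [hN, hN₁, hBt4]
  have hdetN : N.det = N₁.det := by
    rw [hNup, hcol, Matrix.det_updateCol_add]
    have h0 : (N₁.updateCol (Sum.inr 0)
        (Sum.elim (fun i => C (w i) * X) 0 : _ → Polynomial ℤ)).det = 0 := by
      apply Matrix.det_eq_zero_of_row_eq_zero (Sum.inr 1)
      intro j
      rcases eq_or_ne j (Sum.inr 0) with rfl | hj
      · simp [Matrix.updateCol_apply]
      · rw [Matrix.updateCol_ne hj]
        rcases j with j | j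
        · simp [hN₁]
        · have hj' : j ≠ 0 := fun h => hj (by simp [h])
          fin_cases j
          · exact absurd rfl hj'
          · simp [hN₁]
    rw [h0, Matrix.updateCol_eq_self, zero_add]
  have key : polyDet Bt = polyDet B * X := by
    unfold polyDet
    rw [← hN, ← hA, hdetN, hdetN₁]
  rcases hBdet with h | h
  · left
    rw [key, h, pow_succ]
  · right
    rw [key, h, pow_succ]
    ring
end

section
/- Let M be a 2g×2g integer matrix with an Alexander-trivial subgroup of rank 2d (a rank-2d subgroup whose Gram matrix B satisfies det(t·B − Bᵀ) = ±t^d), and let e₁₁ be the 2g×2g matrix with a 1 in the top-left entry and zeros elsewhere. Then the (2g+2)×(2g+2) stabilized matrix M̃ = [[M ± e₁₁, w, 0],[0, 0, 1],[0, 0, 0]] — obtained by stabilizing M ± e₁₁ along the first coordinate as in the paper (with w having ∓1 in the first entry and 0 elsewhere) — is congruent over ℤ to a matrix admitting an Alexander-trivial subgroup of rank 2d. Consequently, changing a Seifert matrix by ±e₁₁ changes the maximal half-rank of an Alexander-trivial subgroup (after stabilization) by at most 1. -/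
open Matrix Polynomial

/-!
Let `T` be the change of basis `e₁ ↦ e₁ + f₀`, where `f₀, f₁` are the two stabilizing vectors.
The top-left block of `Tᵀ M̃ T` picks up `w e₁ᵀ = ∓e₁₁` from the off-diagonal block, which cancels
the crossing change, and `f₀ᵀ M̃ f₀ = 0` from the stabilizing block. So this block is `M` again,
and the Alexander-trivial basis of `M`, extended by zero, has the same Gram matrix for `Tᵀ M̃ T`.
-/

theorem LinearIndependent.sumElim_zero {ι m n R : Type*} [Ring R] {u : ι → m → R}
    (hu : LinearIndependent R u) : LinearIndependent R fun i => Sum.elim (u i) (0 : n → R) := by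
  refine hu.map' ((LinearEquiv.sumArrowLequivProdArrow m n R R).symm.toLinearMap ∘ₗ
    LinearMap.inl R _ _) (LinearMap.ker_eq_bot.2 ?_)
  exact (LinearEquiv.sumArrowLequivProdArrow m n R R).symm.injective.comp LinearMap.inl_injective

namespace Matrix

variable {R : Type*} [CommRing R] {m n : Type*} [Fintype m] [Fintype n]

theorem sumElim_zero_dotProduct_mulVec_sumElim_zero (P : Matrix (m ⊕ n) (m ⊕ n) R)
    (v w : m → R) : Sum.elim v 0 ⬝ᵥ P *ᵥ Sum.elim w 0 = v ⬝ᵥ P.toBlocks₁₁ *ᵥ w := by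
  rw [← fromBlocks_toBlocks P, fromBlocks_mulVec, sumElim_dotProduct_sumElim]
  simp

variable [DecidableEq m] [DecidableEq n]

theorem toBlocks₁₁_transpose_mul_mul_fromBlocks_one_zero_one (A : Matrix m m R)
    (W : Matrix m n R) (N : Matrix n n R) (E : Matrix n m R) :
    ((fromBlocks 1 0 E 1)ᵀ * fromBlocks A W 0 N * fromBlocks 1 0 E 1).toBlocks₁₁ =
      A + W * E + Eᵀ * N * E := by
  simp only [fromBlocks_transpose, transpose_one, transpose_zero, fromBlocks_multiply,
    Matrix.one_mul, Matrix.zero_mul, Matrix.mul_one, Matrix.mul_zero, Matrix.add_mul,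
    Matrix.mul_assoc, add_zero, zero_add, toBlocks_fromBlocks₁₁]
  abel

def stabilizationShear (i₀ : m) : Matrix (m ⊕ Fin 2) (m ⊕ Fin 2) R :=
  fromBlocks 1 0 (single 0 i₀ 1) 1

theorem det_stabilizationShear (i₀ : m) : (stabilizationShear (R := R) i₀).det = 1 := by
  simp [stabilizationShear]

theorem toBlocks₁₁_congr_stabilizationShear (M : Matrix m m R) (i₀ : m) (ε : R) :
    ((stabilizationShear i₀)ᵀ * fromBlocks (M + ε • single i₀ i₀ 1)
      (of fun i (j : Fin 2) => if j = 0 then (if i = i₀ then -ε else 0) else 0)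
      0 !![0, 1; 0, 0] * stabilizationShear i₀).toBlocks₁₁ = M := by
  have hW : (of fun i (j : Fin 2) => if j = 0 then (if i = i₀ then -ε else 0) else 0) =
      single i₀ 0 (-ε) := by
    ext i j
    fin_cases j <;> simp [single_apply, eq_comm]
  have hN : !![(0 : R), 1; 0, 0] = single 0 1 1 := by
    ext i j; fin_cases i <;> fin_cases j <;> rfl
  rw [stabilizationShear, toBlocks₁₁_transpose_mul_mul_fromBlocks_one_zero_one, hW, hN,
    single_mul_single_same, Matrix.mul_assoc]
  simp [smul_single, add_assoc, ← single_add]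

end Matrix

theorem stmt15_general (g d : ℕ) (hg : 0 < 2 * g)
    (M : Matrix (Fin (2 * g)) (Fin (2 * g)) ℤ)
    -- an Alexander-trivial subgroup of rank 2d for M
    (u : Fin (2 * d) → (Fin (2 * g) → ℤ)) (hu : LinearIndependent ℤ u)
    (B : Matrix (Fin (2 * d)) (Fin (2 * d)) ℤ)
    (hB : ∀ i j, B i j = u i ⬝ᵥ M *ᵥ u j)
    (hBdet : polyDet B = X ^ d ∨ polyDet B = -X ^ d)
    -- the sign of the crossing change
    (ε : ℤ)
    -- the stabilized matrix [[M ± e₁₁, w, 0], [0, 0, 1], [0, 0, 0]]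
    -- with w = ∓e₁
    (Mt : Matrix (Fin (2 * g) ⊕ Fin 2) (Fin (2 * g) ⊕ Fin 2) ℤ)
    (hMt : Mt = fromBlocks
      (M + ε • Matrix.single (⟨0, hg⟩ : Fin (2 * g)) (⟨0, hg⟩ : Fin (2 * g)) (1 : ℤ))
      (Matrix.of fun i (j : Fin 2) =>
        if j = 0 then (if i = (⟨0, hg⟩ : Fin (2 * g)) then -ε else 0) else 0)
      0 !![0, 1; 0, 0]) :
    -- Mt is congruent over ℤ to a matrix admitting an
    -- Alexander-trivial subgroup of rank 2d
    ∃ T : Matrix (Fin (2 * g) ⊕ Fin 2) (Fin (2 * g) ⊕ Fin 2) ℤ, IsUnit T.det ∧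
      ∃ ut : Fin (2 * d) → (Fin (2 * g) ⊕ Fin 2 → ℤ), LinearIndependent ℤ ut ∧
        ∃ Bt : Matrix (Fin (2 * d)) (Fin (2 * d)) ℤ,
          (∀ i j, Bt i j = ut i ⬝ᵥ (Tᵀ * Mt * T) *ᵥ ut j) ∧
          (∃ k : ℕ, polyDet Bt = X ^ k ∨ polyDet Bt = -X ^ k) := by
  refine ⟨stabilizationShear ⟨0, hg⟩, by rw [det_stabilizationShear]; exact isUnit_one,
    fun i => Sum.elim (u i) 0, hu.sumElim_zero, B, fun i j => ?_, d, hBdet⟩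
  rw [hB, sumElim_zero_dotProduct_mulVec_sumElim_zero, hMt,
    toBlocks₁₁_congr_stabilizationShear]

theorem stmt15 (g d : ℕ) (hg : 0 < 2 * g)
    (M : Matrix (Fin (2 * g)) (Fin (2 * g)) ℤ)
    -- an Alexander-trivial subgroup of rank 2d for M
    (u : Fin (2 * d) → (Fin (2 * g) → ℤ)) (hu : LinearIndependent ℤ u)
    (B : Matrix (Fin (2 * d)) (Fin (2 * d)) ℤ)
    (hB : ∀ i j, B i j = u i ⬝ᵥ M *ᵥ u j)
    (hBdet : polyDet B = X ^ d ∨ polyDet B = -X ^ d)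
    -- the sign of the crossing change
    (ε : ℤ) (hε : ε = 1 ∨ ε = -1)
    -- the stabilized matrix [[M ± e₁₁, w, 0], [0, 0, 1], [0, 0, 0]]
    -- with w = ∓e₁
    (Mt : Matrix (Fin (2 * g) ⊕ Fin 2) (Fin (2 * g) ⊕ Fin 2) ℤ)
    (hMt : Mt = fromBlocks
      (M + ε • Matrix.single (⟨0, hg⟩ : Fin (2 * g)) (⟨0, hg⟩ : Fin (2 * g)) (1 : ℤ))
      (Matrix.of fun i (j : Fin 2) =>
        if j = 0 then (if i = (⟨0, hg⟩ : Fin (2 * g)) then -ε else 0) else 0)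
      0 !![0, 1; 0, 0]) :
    -- Mt is congruent over ℤ to a matrix admitting an
    -- Alexander-trivial subgroup of rank 2d
    ∃ T : Matrix (Fin (2 * g) ⊕ Fin 2) (Fin (2 * g) ⊕ Fin 2) ℤ, IsUnit T.det ∧
      ∃ ut : Fin (2 * d) → (Fin (2 * g) ⊕ Fin 2 → ℤ), LinearIndependent ℤ ut ∧
        ∃ Bt : Matrix (Fin (2 * d)) (Fin (2 * d)) ℤ,
          (∀ i j, Bt i j = ut i ⬝ᵥ (Tᵀ * Mt * T) *ᵥ ut j) ∧
          (∃ k : ℕ, polyDet Bt = X ^ k ∨ polyDet Bt = -X ^ k) :=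
  stmt15_general g d hg M u hu B hB hBdet ε Mt hMt
end

section
/- Let A be an n×n integer matrix whose associated quadratic form Q(v) = vᵀAv is indefinite over ℤ (takes both positive and negative values), and define 𝓕 ⊆ ℤ as the set of all integers of the form Σᵢ vᵢᵀAvᵢ for finitely many vectors vᵢ ∈ ℤⁿ (i.e. the union of images of the quadratic forms of A^{⊕k} for all k ≥ 1, which is closed under addition). Then 𝓕 is a subgroup of ℤ, namely the subgroup generated by the entries A_{kk} (1 ≤ k ≤ n) and A_{ij} + A_{ji} (1 ≤ i < j ≤ n). -/
open Matrix

/-!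
The set of sums of values of `Q(v) = vᵀAv` is the additive monoid generated by the values of `Q`.
In `ℤ`, a submonoid containing some `p > 0` and some `q < 0` is a subgroup, because
`-x = x q + (-q - 1) x` for `x ≥ 0` and `-x = (-x) p + (p - 1) x` for `x < 0`. So it is the
subgroup generated by the values of `Q`. Now `Q(eₖ) = Aₖₖ` and the polar form gives
`Q(eᵢ + eⱼ) - Q(eᵢ) - Q(eⱼ) = Aᵢⱼ + Aⱼᵢ`; conversely every value of `Q` lies in the subgroup
generated by these, since `Q(x + y) = Q x + Q y + polar Q x y` and the polar form is bilinear.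
-/

namespace AddSubmonoid

theorem coe_closure_range {α M : Type*} [AddCommMonoid M] (f : α → M) :
    (closure (Set.range f) : Set M) = {x | ∃ (k : ℕ) (v : Fin k → α), x = ∑ i, f (v i)} := by
  ext x
  constructor
  · intro hx
    induction hx using closure_induction with
    | mem _ h =>
      obtain ⟨a, rfl⟩ := h
      exact ⟨1, fun _ => a, by simp⟩
    | zero => exact ⟨0, Fin.elim0, by simp⟩
    | add _ _ _ _ hx hy =>
      obtain ⟨k, v, rfl⟩ := hx
      obtain ⟨l, w, rfl⟩ := hy
      exact ⟨k + l, Fin.append v w, by simp [Fin.sum_univ_add]⟩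
  · rintro ⟨k, v, rfl⟩
    exact sum_mem _ fun i _ => subset_closure (Set.mem_range_self (v i))

theorem neg_mem_of_pos_of_neg {S : AddSubmonoid ℤ} {p q x : ℤ} (hp : p ∈ S) (hp0 : 0 < p)
    (hq : q ∈ S) (hq0 : q < 0) (hx : x ∈ S) : -x ∈ S := by
  rcases le_or_gt 0 x with hx0 | hx0
  · have h : -x = x.toNat • q + (-q - 1).toNat • x := by
      simp only [nsmul_eq_mul, Int.toNat_of_nonneg hx0, Int.toNat_of_nonneg (by omega : 0 ≤ -q - 1)]
      ring
    exact h ▸ add_mem (nsmul_mem hq _) (nsmul_mem hx _)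
  · have h : -x = (-x).toNat • p + (p - 1).toNat • x := by
      simp only [nsmul_eq_mul, Int.toNat_of_nonneg (by omega : 0 ≤ -x),
        Int.toNat_of_nonneg (by omega : 0 ≤ p - 1)]
      ring
    exact h ▸ add_mem (nsmul_mem hp _) (nsmul_mem hx _)

end AddSubmonoid

theorem AddSubgroup.closure_toAddSubmonoid_of_pos_of_neg {s : Set ℤ} {p q : ℤ} (hp : p ∈ s)
    (hp0 : 0 < p) (hq : q ∈ s) (hq0 : q < 0) :
    (closure s).toAddSubmonoid = AddSubmonoid.closure s := by
  rw [closure_toAddSubmonoid]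
  refine le_antisymm (AddSubmonoid.closure_le.2 (Set.union_subset AddSubmonoid.subset_closure ?_))
    (AddSubmonoid.closure_mono Set.subset_union_left)
  intro x hx
  simpa using AddSubmonoid.neg_mem_of_pos_of_neg (AddSubmonoid.subset_closure hp) hp0
    (AddSubmonoid.subset_closure hq) hq0 (AddSubmonoid.subset_closure (Set.mem_neg.1 hx))

namespace QuadraticMap

variable {R M N : Type*} [CommRing R] [AddCommGroup M] [AddCommGroup N] [Module R M] [Module R N]

theorem polar_mem_of_mem_span (Q : QuadraticMap R M N) {s : Set M} {H : Submodule R N}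
    (hpolar : ∀ x ∈ s, ∀ y ∈ s, polar Q x y ∈ H) {x y : M} (hx : x ∈ Submodule.span R s)
    (hy : y ∈ Submodule.span R s) : polar Q x y ∈ H := by
  have h := Submodule.apply_mem_map₂ Q.polarBilin hx hy
  rw [Submodule.map₂_span_span] at h
  refine Submodule.span_le.2 ?_ h
  rintro _ ⟨x, hx, y, hy, rfl⟩
  exact hpolar x hx y hy

theorem apply_mem_of_mem_span (Q : QuadraticMap R M N) {s : Set M} {H : Submodule R N}
    (hQ : ∀ x ∈ s, Q x ∈ H) (hpolar : ∀ x ∈ s, ∀ y ∈ s, polar Q x y ∈ H) {v : M}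
    (hv : v ∈ Submodule.span R s) : Q v ∈ H := by
  induction hv using Submodule.span_induction with
  | mem x hx => exact hQ x hx
  | zero => simp
  | add x y hx hy hQx hQy =>
    rw [QuadraticMap.map_add Q]
    exact add_mem (add_mem hQx hQy) (Q.polar_mem_of_mem_span hpolar hx hy)
  | smul a x _ hQx =>
    rw [QuadraticMap.map_smul]
    exact H.smul_mem _ hQx

end QuadraticMap

namespace Matrix

section

variable {R n : Type*} [CommRing R] [Fintype n] [DecidableEq n] (A : Matrix n n R)

theorem toQuadraticForm'_apply (v : n → R) : A.toQuadraticForm' v = v ⬝ᵥ A *ᵥ v :=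
  toLinearMap₂'_apply' A v v

theorem toQuadraticForm'_single (i : n) : A.toQuadraticForm' (Pi.single i 1) = A i i := by
  simp [A.toQuadraticForm'_apply]

theorem polar_toQuadraticForm'_single (i j : n) :
    QuadraticMap.polar A.toQuadraticForm' (Pi.single i 1) (Pi.single j 1) = A i j + A j i := by
  rw [toQuadraticForm', LinearMap.BilinMap.polar_toQuadraticMap, toLinearMap₂'_apply',
    toLinearMap₂'_apply']
  simp

end

theorem closure_range_toQuadraticForm' {ι : Type*} [Fintype ι] [LinearOrder ι]
    (A : Matrix ι ι ℤ) :
    AddSubgroup.closure (Set.range A.toQuadraticForm') = AddSubgroup.closure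
      ((Set.range fun k => A k k) ∪ {x | ∃ i j, i < j ∧ x = A i j + A j i}) := by
  set H :=
    AddSubgroup.closure ((Set.range fun k => A k k) ∪ {x | ∃ i j, i < j ∧ x = A i j + A j i})
  have hdiag (i : ι) : A i i ∈ H := AddSubgroup.subset_closure (Or.inl ⟨i, rfl⟩)
  have hoffdiag (i j : ι) : A i j + A j i ∈ H := by
    rcases lt_trichotomy i j with hij | rfl | hji
    · exact AddSubgroup.subset_closure (Or.inr ⟨i, j, hij, rfl⟩)
    · exact add_mem (hdiag i) (hdiag i)
    · exact add_comm (A j i) _ ▸ AddSubgroup.subset_closure (Or.inr ⟨j, i, hji, rfl⟩)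
  refine le_antisymm (AddSubgroup.closure_le _ |>.2 ?_) (AddSubgroup.closure_le _ |>.2 ?_)
  · rintro _ ⟨v, rfl⟩
    refine A.toQuadraticForm'.apply_mem_of_mem_span (H := H.toIntSubmodule)
      (s := Set.range (Pi.basisFun ℤ ι)) ?_ ?_ ((Pi.basisFun ℤ ι).span_eq ▸ trivial)
    · rintro _ ⟨i, rfl⟩
      rw [Pi.basisFun_apply, A.toQuadraticForm'_single]
      exact hdiag i
    · rintro _ ⟨i, rfl⟩ _ ⟨j, rfl⟩
      rw [Pi.basisFun_apply, Pi.basisFun_apply, A.polar_toQuadraticForm'_single]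
      exact hoffdiag i j
  · have hQ (v : ι → ℤ) :
        A.toQuadraticForm' v ∈ AddSubgroup.closure (Set.range A.toQuadraticForm') :=
      AddSubgroup.subset_closure (Set.mem_range_self v)
    rintro _ (⟨i, rfl⟩ | ⟨i, j, -, rfl⟩)
    · exact AddSubgroup.subset_closure ⟨_, A.toQuadraticForm'_single i⟩
    · rw [← A.polar_toQuadraticForm'_single]
      exact sub_mem (sub_mem (hQ _) (hQ _)) (hQ _)

end Matrix

theorem stmt17 (n : ℕ) (A : Matrix (Fin n) (Fin n) ℤ)
    (hindef : (∃ v : Fin n → ℤ, 0 < v ⬝ᵥ A *ᵥ v) ∧ (∃ w : Fin n → ℤ, w ⬝ᵥ A *ᵥ w < 0))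
    (F : Set ℤ)
    (hF : F = {x | ∃ (k : ℕ) (v : Fin k → (Fin n → ℤ)),
      x = ∑ i, (v i) ⬝ᵥ A *ᵥ (v i)}) :
    F = (AddSubgroup.closure
      ((Set.range fun k : Fin n => A k k) ∪
        {x | ∃ i j : Fin n, i < j ∧ x = A i j + A j i}) : Set ℤ) := by
  obtain ⟨⟨v, hv⟩, ⟨w, hw⟩⟩ := hindef
  rw [← A.toQuadraticForm'_apply] at hv hw
  have hF' : F = AddSubmonoid.closure (Set.range A.toQuadraticForm') := by
    simp only [hF, AddSubmonoid.coe_closure_range, A.toQuadraticForm'_apply]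
  rw [hF', ← A.closure_range_toQuadraticForm', ← AddSubgroup.coe_toAddSubmonoid,
    AddSubgroup.closure_toAddSubmonoid_of_pos_of_neg (Set.mem_range_self v) hv
      (Set.mem_range_self w) hw]
end
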